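/- Let F, H be R-modules, E a submodule of F, φ : F → H a module homomorphism. In the setting Aut(F, E, φ) of automorphisms of F fixing E and respecting φ, for every γ, η in this group the map φ_γ : f ↦ f − γ(f) satisfies φ_{ηγ} = φ_η + φ_γ; in particular Aut(F, E, φ) is an abelian group. -/
import Mathlib


/-- For automorphisms `γ, η` of `F` fixing `E` and `ker φ` pointwise and respecting `φ`,
the maps `φ_γ : f ↦ f - γ f` satisfy `φ_{ηγ} = φ_η + φ_γ`; in particular the group
`Aut(F, E, φ)` is abelian. -/
theorem aut_resp_abelian {R F H : Type*} [CommRing R] [AddCommGroup F] [Module R F]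
    [AddCommGroup H] [Module R H] (E : Submodule R F) (φ : F →ₗ[R] H)
    (γ η : F ≃ₗ[R] F)
    (hγ : (∀ e ∈ E, γ e = e) ∧ (∀ k : F, φ k = 0 → γ k = k) ∧ ∀ f : F, φ (γ f) = φ f)
    (hη : (∀ e ∈ E, η e = e) ∧ (∀ k : F, φ k = 0 → η k = k) ∧ ∀ f : F, φ (η f) = φ f) :
    (∀ f : F, f - (η * γ) f = (f - η f) + (f - γ f)) ∧ η * γ = γ * η := by
  have key : ∀ (α β : F ≃ₗ[R] F),
      ((∀ k : F, φ k = 0 → α k = k) ∧ ∀ f : F, φ (α f) = φ f) →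
      ((∀ k : F, φ k = 0 → β k = k) ∧ ∀ f : F, φ (β f) = φ f) →
      ∀ f : F, f - (α * β) f = (f - α f) + (f - β f) := by
    intro α β hα hβ f
    have h0 : φ (f - β f) = 0 := by
      rw [map_sub, hβ.2 f, sub_self]
    have h1 : α (f - β f) = f - β f := hα.1 _ h0
    have : (α * β) f = α (β f) := rfl
    rw [this]
    have := map_sub α f (β f)
    rw [h1] at this
    -- this : f - β f = α f - α (β f)
    abel_nf
    linear_combination (norm := abel) -this
  refine ⟨key η γ ⟨hη.2.1, hη.2.2⟩ ⟨hγ.2.1, hγ.2.2⟩, ?_⟩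
  ext f
  have h1 := key η γ ⟨hη.2.1, hη.2.2⟩ ⟨hγ.2.1, hγ.2.2⟩ f
  have h2 := key γ η ⟨hγ.2.1, hγ.2.2⟩ ⟨hη.2.1, hη.2.2⟩ f
  have : f - (η * γ) f = f - (γ * η) f := by rw [h1, h2, add_comm]
  exact sub_right_inj.mp this
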